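/- Let T > 0 and let f : [0,T] → L²(0,1) be continuous with f_n(t) := ⟨f(t), φ_n⟩, and assume Σ_{n≥1} λ_n |A_n|² < ∞. For t ∈ [0,T] set v_n(t) := −√λ_n A_n sin(√λ_n t) + B_n cos(√λ_n t) + sin(√λ_n t) ∫₀ᵗ sin(√λ_n s) f_n(s) ds + cos(√λ_n t) ∫₀ᵗ cos(√λ_n s) f_n(s) ds. Then for every t ∈ [0,T] the sequence (v_n(t))_{n≥1} is square-summable and the element v(t) := Σ_{n≥1} v_n(t) φ_n of L²(0,1) satisfies ‖v(t)‖²_{L²(0,1)} ≤ 4 ( Σ_{n≥1} λ_n |A_n|² + Σ_{n≥1} |B_n|² + 2 T² sup_{s ∈ [0,T]} ‖f(s)‖²_{L²(0,1)} ). -/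

import Mathlib

/-
Each mode is bounded by the triangle inequality, using `|sin|, |cos| ≤ 1`:
`|v_n(t)| ≤ √λ_n |A_n| + |B_n| + 2 ∫₀ᵗ |f_n|`, hence
`|v_n(t)|² ≤ 4 (λ_n |A_n|² + |B_n|² + 2 t ∫₀ᵗ |f_n|²)` by Cauchy–Schwarz.
Summing over `n`, Bessel's inequality under the integral gives
`∑ₙ ∫₀ᵗ |f_n|² ≤ ∫₀ᵗ ‖f‖² ≤ t sup ‖f‖²`, and Parseval identifies `‖v(t)‖²` with `∑ₙ |v_n(t)|²`.
-/

open MeasureTheory Real Set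

noncomputable section

/-- The measure on `(0,1)`, so that `Lp ℂ 2 μ01` is the complex Hilbert space `L²(0,1)`. -/
abbrev μ01 : Measure ℝ := MeasureTheory.volume.restrict (Set.Ioo (0:ℝ) 1)

open scoped InnerProductSpace lp

namespace intervalIntegral

theorem sq_integral_le_mul_integral_sq {h : ℝ → ℝ} {a b : ℝ} (hab : a ≤ b)
    (h₁ : IntervalIntegrable h volume a b) (h₂ : IntervalIntegrable (fun s => h s ^ 2) volume a b) :
    (∫ s in a..b, h s) ^ 2 ≤ (b - a) * ∫ s in a..b, h s ^ 2 := by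
  rcases hab.eq_or_lt with rfl | hlt
  · simp
  -- expand `0 ≤ ∫ ((b - a) h - J)²` and take `J = ∫ h`
  have hexpand : ∀ J : ℝ, ∫ s in a..b, ((b - a) * h s - J) ^ 2
      = (b - a) ^ 2 * (∫ s in a..b, h s ^ 2) - 2 * (b - a) * J * (∫ s in a..b, h s)
        + (b - a) * J ^ 2 := by
    intro J
    have hpoint : ∀ s, ((b - a) * h s - J) ^ 2
        = (b - a) ^ 2 * h s ^ 2 - 2 * (b - a) * J * h s + J ^ 2 := fun s => by ring
    simp_rw [hpoint]
    rw [integral_add ((h₂.const_mul _).sub (h₁.const_mul _)) intervalIntegrable_const,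
      integral_sub (h₂.const_mul _) (h₁.const_mul _), integral_const_mul, integral_const_mul,
      integral_const, smul_eq_mul]
  have hnonneg : 0 ≤ ∫ s in a..b, ((b - a) * h s - ∫ s in a..b, h s) ^ 2 :=
    integral_nonneg hab fun s _ => sq_nonneg _
  rw [hexpand] at hnonneg
  nlinarith

theorem integral_le_mul_ciSup {g : ℝ → ℝ} {a b t : ℝ} (ht : t ∈ Icc a b)
    (hg : ContinuousOn g (Icc a b)) :
    ∫ s in a..t, g s ≤ (t - a) * ⨆ s : Icc a b, g s := by
  have hbdd : BddAbove (range fun s : Icc a b => g s) := by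
    simpa only [image_eq_range] using (isCompact_Icc.image_of_continuousOn hg).bddAbove
  have hsub : Icc a t ⊆ Icc a b := Icc_subset_Icc_right ht.2
  calc ∫ s in a..t, g s ≤ ∫ _ in a..t, ⨆ s : Icc a b, g s :=
        integral_mono_on ht.1 ((hg.mono hsub).intervalIntegrable_of_Icc ht.1)
          intervalIntegrable_const fun s hs => le_ciSup hbdd ⟨s, hsub hs⟩
    _ = (t - a) * ⨆ s : Icc a b, g s := by simp

theorem norm_integral_mul_le_integral_norm_of_norm_le_one {𝕜 : Type*} [RCLike 𝕜]
    {c g : ℝ → 𝕜} {a b : ℝ} (hab : a ≤ b) (hc : ∀ s, ‖c s‖ ≤ 1)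
    (hg : IntervalIntegrable (fun s => ‖g s‖) volume a b) :
    ‖∫ s in a..b, c s * g s‖ ≤ ∫ s in a..b, ‖g s‖ :=
  norm_integral_le_of_norm_le hab
    (Filter.Eventually.of_forall fun s _ => by
      rw [norm_mul]; exact mul_le_of_le_one_left (norm_nonneg _) (hc s)) hg

end intervalIntegral

namespace Orthonormal

variable {ι 𝕜 E : Type*} [RCLike 𝕜] [NormedAddCommGroup E] [InnerProductSpace 𝕜 E]
  {v : ι → E} {f : ℝ → E} {a b : ℝ}

theorem sum_integral_norm_inner_sq_le (hv : Orthonormal 𝕜 v) (hab : a ≤ b)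
    (hf : ContinuousOn f (Icc a b)) (u : Finset ι) :
    ∑ i ∈ u, ∫ x in a..b, ‖⟪f x, v i⟫_𝕜‖ ^ 2 ≤ ∫ x in a..b, ‖f x‖ ^ 2 := by
  have hint : ∀ g : ℝ → ℝ, ContinuousOn g (Icc a b) → IntervalIntegrable g volume a b :=
    fun g hg => hg.intervalIntegrable_of_Icc hab
  rw [← intervalIntegral.integral_finsetSum fun i _ =>
    hint (fun x => ‖⟪f x, v i⟫_𝕜‖ ^ 2) ((hf.inner continuousOn_const).norm.pow 2)]
  refine intervalIntegral.integral_mono_on hab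
    (hint _ (continuousOn_finsetSum _ fun i _ => (hf.inner continuousOn_const).norm.pow 2))
    (hint _ (hf.norm.pow 2)) fun x _ => ?_
  simpa only [norm_inner_symm] using hv.sum_inner_products_le (f x)

theorem summable_integral_norm_inner_sq (hv : Orthonormal 𝕜 v) (hab : a ≤ b)
    (hf : ContinuousOn f (Icc a b)) :
    Summable fun i => ∫ x in a..b, ‖⟪f x, v i⟫_𝕜‖ ^ 2 :=
  summable_of_sum_le (fun _ => intervalIntegral.integral_nonneg hab fun _ _ => by positivity)
    (hv.sum_integral_norm_inner_sq_le hab hf)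

theorem tsum_integral_norm_inner_sq_le (hv : Orthonormal 𝕜 v) (hab : a ≤ b)
    (hf : ContinuousOn f (Icc a b)) :
    ∑' i, ∫ x in a..b, ‖⟪f x, v i⟫_𝕜‖ ^ 2 ≤ ∫ x in a..b, ‖f x‖ ^ 2 :=
  Real.tsum_le_of_sum_le (fun _ => intervalIntegral.integral_nonneg hab fun _ _ => by positivity)
    (hv.sum_integral_norm_inner_sq_le hab hf)

end Orthonormal

theorem HilbertBasis.norm_tsum_smul_sq {ι 𝕜 E : Type*} [RCLike 𝕜] [NormedAddCommGroup E]
    [InnerProductSpace 𝕜 E] (b : HilbertBasis ι 𝕜 E) {c : ι → 𝕜}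
    (hc : Summable fun i => ‖c i‖ ^ 2) :
    ‖∑' i, c i • b i‖ ^ 2 = ∑' i, ‖c i‖ ^ 2 := by
  have h2 : ((2 : ENNReal)).toReal = ((2 : ℕ) : ℝ) := by norm_num
  let F : ℓ²(ι, 𝕜) := ⟨c, memℓp_gen (by simpa only [h2, Real.rpow_natCast] using hc)⟩
  rw [(b.hasSum_repr_symm F).tsum_eq, b.repr.symm.norm_map]
  simpa only [h2, Real.rpow_natCast] using lp.norm_rpow_eq_tsum (by norm_num) F

theorem norm_wave_mode_le (ω t : ℝ) (ht : 0 ≤ t) (a b : ℂ) {g : ℝ → ℂ}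
    (hg : IntervalIntegrable (fun s => ‖g s‖) volume 0 t) :
    ‖-(ω : ℂ) * a * (Real.sin (ω * t) : ℂ) + b * (Real.cos (ω * t) : ℂ)
      + (Real.sin (ω * t) : ℂ) * (∫ s in (0:ℝ)..t, (Real.sin (ω * s) : ℂ) * g s)
      + (Real.cos (ω * t) : ℂ) * (∫ s in (0:ℝ)..t, (Real.cos (ω * s) : ℂ) * g s)‖
      ≤ |ω| * ‖a‖ + ‖b‖ + 2 * ∫ s in (0:ℝ)..t, ‖g s‖ := by
  have hsin : ∀ x : ℝ, ‖(Real.sin x : ℂ)‖ ≤ 1 := fun x => by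
    rw [Complex.norm_real, Real.norm_eq_abs]; exact abs_sin_le_one x
  have hcos : ∀ x : ℝ, ‖(Real.cos x : ℂ)‖ ≤ 1 := fun x => by
    rw [Complex.norm_real, Real.norm_eq_abs]; exact abs_cos_le_one x
  have hJsin := intervalIntegral.norm_integral_mul_le_integral_norm_of_norm_le_one ht
    (fun s => hsin (ω * s)) hg
  have hJcos := intervalIntegral.norm_integral_mul_le_integral_norm_of_norm_le_one ht
    (fun s => hcos (ω * s)) hg
  refine norm_add₄_le.trans ?_
  simp only [norm_mul, norm_neg, Complex.norm_real, Real.norm_eq_abs]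
  have h₁ : |ω| * ‖a‖ * |Real.sin (ω * t)| ≤ |ω| * ‖a‖ :=
    mul_le_of_le_one_right (by positivity) (abs_sin_le_one _)
  have h₂ : ‖b‖ * |Real.cos (ω * t)| ≤ ‖b‖ :=
    mul_le_of_le_one_right (by positivity) (abs_cos_le_one _)
  have h₃ := mul_le_of_le_one_left (norm_nonneg _) (abs_sin_le_one (ω * t)) |>.trans hJsin
  have h₄ := mul_le_of_le_one_left (norm_nonneg _) (abs_cos_le_one (ω * t)) |>.trans hJcos
  linarith

theorem norm_wave_mode_sq_le (ω t : ℝ) (ht : 0 ≤ t) (a b : ℂ) {g : ℝ → ℂ}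
    (hg : ContinuousOn g (Icc 0 t)) :
    ‖-(ω : ℂ) * a * (Real.sin (ω * t) : ℂ) + b * (Real.cos (ω * t) : ℂ)
      + (Real.sin (ω * t) : ℂ) * (∫ s in (0:ℝ)..t, (Real.sin (ω * s) : ℂ) * g s)
      + (Real.cos (ω * t) : ℂ) * (∫ s in (0:ℝ)..t, (Real.cos (ω * s) : ℂ) * g s)‖ ^ 2
      ≤ 4 * (ω ^ 2 * ‖a‖ ^ 2 + ‖b‖ ^ 2 + 2 * (t * ∫ s in (0:ℝ)..t, ‖g s‖ ^ 2)) := by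
  have hJ := intervalIntegral.sq_integral_le_mul_integral_sq ht
    (hg.norm.intervalIntegrable_of_Icc ht) ((hg.norm.pow 2).intervalIntegrable_of_Icc ht)
  have hmode := norm_wave_mode_le ω t ht a b (hg.norm.intervalIntegrable_of_Icc ht)
  set J := ∫ s in (0:ℝ)..t, ‖g s‖
  have hJ0 : 0 ≤ J := intervalIntegral.integral_nonneg ht fun _ _ => norm_nonneg _
  rw [sub_zero] at hJ
  calc _ ≤ (|ω| * ‖a‖ + ‖b‖ + 2 * J) ^ 2 := pow_le_pow_left₀ (norm_nonneg _) hmode 2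
    _ ≤ 4 * ((|ω| * ‖a‖) ^ 2 + ‖b‖ ^ 2 + 2 * J ^ 2) := by
      nlinarith [sq_nonneg (|ω| * ‖a‖ - ‖b‖), sq_nonneg (|ω| * ‖a‖ - J), sq_nonneg (‖b‖ - J)]
    _ ≤ _ := by rw [mul_pow, sq_abs]; gcongr

theorem stmt10_general
    (φ : HilbertBasis ℕ ℂ (Lp ℂ 2 μ01))
    (lam : ℕ → ℝ) (hlam : ∀ n, 1 ≤ lam n)
    (u₁ : Lp ℂ 2 μ01)
    (A B : ℕ → ℂ)
    (hB : ∀ n, B n = (inner ℂ u₁ (φ n) : ℂ))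
    (T : ℝ)
    (f : ℝ → Lp ℂ 2 μ01) (hf : ContinuousOn f (Set.Icc 0 T))
    (hA1 : Summable fun n => lam n * ‖A n‖ ^ 2)
    (V : ℕ → ℝ → ℂ)
    (hV : ∀ n t, V n t =
      -((Real.sqrt (lam n) : ℂ)) * A n * (Real.sin (Real.sqrt (lam n) * t) : ℂ)
      + B n * (Real.cos (Real.sqrt (lam n) * t) : ℂ)
      + (Real.sin (Real.sqrt (lam n) * t) : ℂ)
          * (∫ s in (0:ℝ)..t, (Real.sin (Real.sqrt (lam n) * s) : ℂ) * (inner ℂ (f s) (φ n) : ℂ))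
      + (Real.cos (Real.sqrt (lam n) * t) : ℂ)
          * (∫ s in (0:ℝ)..t, (Real.cos (Real.sqrt (lam n) * s) : ℂ) * (inner ℂ (f s) (φ n) : ℂ)))
    (t : ℝ) (ht : t ∈ Set.Icc (0:ℝ) T) :
    Summable (fun n => ‖V n t‖ ^ 2) ∧
    ‖∑' n, V n t • φ n‖ ^ 2
      ≤ 4 * ((∑' n, lam n * ‖A n‖ ^ 2) + (∑' n, ‖B n‖ ^ 2)
          + 2 * T ^ 2 * ⨆ s : Set.Icc (0:ℝ) T, ‖f s‖ ^ 2) := by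
  have hft : ContinuousOn f (Icc 0 t) := hf.mono (Icc_subset_Icc_right ht.2)
  set I : ℕ → ℝ := fun n => ∫ s in (0:ℝ)..t, ‖⟪f s, φ n⟫_ℂ‖ ^ 2
  set M := ⨆ s : Icc (0:ℝ) T, ‖f s‖ ^ 2
  have hB2 : Summable fun n => ‖B n‖ ^ 2 := by
    simpa only [hB, norm_inner_symm] using φ.orthonormal.inner_products_summable u₁
  have hmode : ∀ n, ‖V n t‖ ^ 2 ≤ 4 * (lam n * ‖A n‖ ^ 2 + ‖B n‖ ^ 2 + 2 * (t * I n)) := by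
    intro n
    have h := norm_wave_mode_sq_le (√(lam n)) t ht.1 (A n) (B n)
      (hft.inner (continuousOn_const (c := φ n)))
    rwa [Real.sq_sqrt (zero_le_one.trans (hlam n)), ← hV] at h
  have hI2 : Summable fun n => 2 * (t * I n) :=
    ((φ.orthonormal.summable_integral_norm_inner_sq ht.1 hft).mul_left t).mul_left 2
  have hP : Summable fun n => lam n * ‖A n‖ ^ 2 + ‖B n‖ ^ 2 + 2 * (t * I n) :=
    (hA1.add hB2).add hI2
  have hV2 : Summable fun n => ‖V n t‖ ^ 2 :=
    (hP.mul_left 4).of_nonneg_of_le (fun _ => sq_nonneg _) hmode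
  have hI : ∑' n, I n ≤ t * M := by
    simpa only [sub_zero] using (φ.orthonormal.tsum_integral_norm_inner_sq_le ht.1 hft).trans
      (intervalIntegral.integral_le_mul_ciSup ht (hf.norm.pow 2))
  have hM : 0 ≤ M := Real.iSup_nonneg fun _ => sq_nonneg _
  have hIT : t * ∑' n, I n ≤ T ^ 2 * M := calc
    t * ∑' n, I n ≤ t * (t * M) := mul_le_mul_of_nonneg_left hI ht.1
    _ = t ^ 2 * M := by ring
    _ ≤ T ^ 2 * M := by gcongr; exacts [ht.1, ht.2]
  refine ⟨hV2, ?_⟩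
  rw [φ.norm_tsum_smul_sq hV2]
  calc ∑' n, ‖V n t‖ ^ 2 ≤ ∑' n, 4 * (lam n * ‖A n‖ ^ 2 + ‖B n‖ ^ 2 + 2 * (t * I n)) :=
        hV2.tsum_le_tsum hmode (hP.mul_left 4)
    _ = 4 * ((∑' n, lam n * ‖A n‖ ^ 2) + (∑' n, ‖B n‖ ^ 2) + 2 * (t * ∑' n, I n)) := by
      rw [tsum_mul_left, (hA1.add hB2).tsum_add hI2, hA1.tsum_add hB2, tsum_mul_left,
        tsum_mul_left]
    _ ≤ _ := by linarith

/-- Estimate (es-nh2) for the term-by-term time derivative of the Duhamel series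
solution of the non-homogeneous wave equation, in Fourier-coefficient form. -/
theorem stmt10
    (φ : HilbertBasis ℕ ℂ (Lp ℂ 2 μ01))
    (lam : ℕ → ℝ) (hlam : ∀ n, 1 ≤ lam n)
    (u₀ u₁ : Lp ℂ 2 μ01)
    (A B : ℕ → ℂ)
    (hA : ∀ n, A n = (inner ℂ u₀ (φ n) : ℂ))
    (hB : ∀ n, B n = (inner ℂ u₁ (φ n) : ℂ))
    (T : ℝ) (hT : 0 < T)
    (f : ℝ → Lp ℂ 2 μ01) (hf : ContinuousOn f (Set.Icc 0 T))
    (hA1 : Summable fun n => lam n * ‖A n‖ ^ 2)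
    (V : ℕ → ℝ → ℂ)
    (hV : ∀ n t, V n t =
      -((Real.sqrt (lam n) : ℂ)) * A n * (Real.sin (Real.sqrt (lam n) * t) : ℂ)
      + B n * (Real.cos (Real.sqrt (lam n) * t) : ℂ)
      + (Real.sin (Real.sqrt (lam n) * t) : ℂ)
          * (∫ s in (0:ℝ)..t, (Real.sin (Real.sqrt (lam n) * s) : ℂ) * (inner ℂ (f s) (φ n) : ℂ))
      + (Real.cos (Real.sqrt (lam n) * t) : ℂ)
          * (∫ s in (0:ℝ)..t, (Real.cos (Real.sqrt (lam n) * s) : ℂ) * (inner ℂ (f s) (φ n) : ℂ)))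
    (t : ℝ) (ht : t ∈ Set.Icc (0:ℝ) T) :
    Summable (fun n => ‖V n t‖ ^ 2) ∧
    ‖∑' n, V n t • φ n‖ ^ 2
      ≤ 4 * ((∑' n, lam n * ‖A n‖ ^ 2) + (∑' n, ‖B n‖ ^ 2)
          + 2 * T ^ 2 * ⨆ s : Set.Icc (0:ℝ) T, ‖f s‖ ^ 2) :=
  stmt10_general φ lam hlam u₁ A B hB T f hf hA1 V hV t ht
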